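/- Let r₀ > 0, let c ∈ ℂ, let h : ℂ → ℂ be holomorphic on the open unit disk and continuous on the closed unit disk, and set f(z) = (1/2)·c·z̄ + h(z). If |f(z)| ≤ r₀ for every z with |z| = 1, then |c| ≤ 2r₀. In particular, if |c| = 3r₀ there is no such f whose boundary values on the unit circle all lie in the closed disk of radius r₀ centered at 0. -/

import Mathlib

open Complex Real Metric
open ComplexConjugate Set

theorem circleIntegral_const_eq_zero {E : Type*} [NormedAddCommGroup E] [NormedSpace ℂ E]
    [CompleteSpace E] (a : E) (c : ℂ) (R : ℝ) : (∮ _ in C(c, R), a) = 0 := by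
  have hone := circleIntegral.integral_sub_zpow_of_ne (n := 0) (by norm_num) c c R
  simp only [zpow_zero] at hone
  simpa [hone] using circleIntegral.integral_smul_const (fun _ => 1) a c R

/- On the circle `|z - c| = R` one has `conj z = conj c + R² / (z - c)`, so `∮ conj z dz` is
`R²` times the winding integral `∮ dz / (z - c) = 2πi`. -/
theorem circleIntegral_conj (c : ℂ) {R : ℝ} (hR : 0 ≤ R) :
    (∮ z in C(c, R), conj z) = 2 * π * I * R ^ 2 := by
  rcases hR.eq_or_lt with rfl | hR
  · simp
  have hconj :
      EqOn (fun z => conj z) (fun z => conj c + (R : ℂ) ^ 2 * (z - c)⁻¹) (sphere c R) := by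
    intro z hz
    have hz' : ‖z - c‖ = R := mem_sphere_iff_norm.mp hz
    have hne : z - c ≠ 0 := by
      rw [← norm_ne_zero_iff, hz']; exact hR.ne'
    have hnormSq : (z - c) * conj (z - c) = (R : ℂ) ^ 2 := by
      rw [mul_conj, normSq_eq_norm_sq, hz']; push_cast; ring
    field_simp
    rw [map_sub] at hnormSq
    linear_combination hnormSq
  rw [circleIntegral.integral_congr hR.le hconj,
    circleIntegral.integral_add (circleIntegrable_const _ _ _) ?inv,
    circleIntegral.integral_const_mul, circleIntegral.integral_sub_center_inv c hR.ne']
  case inv =>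
    exact (circleIntegrable_sub_inv_iff.mpr (Or.inr (by simp [abs_of_pos hR, hR.ne]))).const_smul
  rw [circleIntegral_const_eq_zero]
  ring

theorem circleIntegral_const_mul_conj_add {a c : ℂ} {R : ℝ} (hR : 0 ≤ R) {h : ℂ → ℂ}
    (hhol : DifferentiableOn ℂ h (ball c R)) (hcont : ContinuousOn h (closedBall c R)) :
    (∮ z in C(c, R), a * conj z + h z) = 2 * π * I * R ^ 2 * a := by
  have hh : (∮ z in C(c, R), h z) = 0 :=
    circleIntegral_eq_zero_of_differentiable_on_off_countable hR countable_empty hcont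
      fun z hz => hhol.differentiableAt (isOpen_ball.mem_nhds hz.1)
  have hconj : CircleIntegrable (fun z => a * conj z) c R :=
    (continuous_const.mul continuous_conj).continuousOn.circleIntegrable hR
  have hint : CircleIntegrable h c R := (hcont.mono sphere_subset_closedBall).circleIntegrable hR
  rw [circleIntegral.integral_add hconj hint,
    circleIntegral.integral_const_mul, circleIntegral_conj c hR, hh]
  ring

theorem abs_c_le_of_boundary_bound_general
    (r₀ : ℝ) (c : ℂ) (h f : ℂ → ℂ)
    (hhol : DifferentiableOn ℂ h (Metric.ball (0 : ℂ) 1))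
    (hcont : ContinuousOn h (Metric.closedBall (0 : ℂ) 1))
    (hf : ∀ z : ℂ, f z = (1 / 2 : ℂ) * c * (starRingEnd ℂ) z + h z)
    (hbound : ∀ z : ℂ, ‖z‖ = 1 → ‖f z‖ ≤ r₀) :
    ‖c‖ ≤ 2 * r₀ := by
  have hintegral : (∮ z in C(0, 1), f z) = π * I * c := by
    simp_rw [hf, circleIntegral_const_mul_conj_add zero_le_one hhol hcont]
    push_cast
    ring
  have hestimate : ‖∮ z in C(0, 1), f z‖ ≤ 2 * π * 1 * r₀ :=
    circleIntegral.norm_integral_le_of_norm_le_const zero_le_one fun z hz =>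
      hbound z (by simpa using hz)
  rw [hintegral, norm_mul, norm_mul, norm_real, norm_I, Real.norm_of_nonneg pi_pos.le] at hestimate
  exact le_of_mul_le_mul_left (by linarith) pi_pos

/-- If `h` is holomorphic on the open unit disk and continuous on the closed unit disk,
`f z = (1/2)·c·z̄ + h z`, and `|f z| ≤ r₀` for every `z` on the unit circle, then
`|c| ≤ 2·r₀`. -/
theorem abs_c_le_of_boundary_bound
    (r₀ : ℝ) (hr₀ : 0 < r₀) (c : ℂ) (h f : ℂ → ℂ)
    (hhol : DifferentiableOn ℂ h (Metric.ball (0 : ℂ) 1))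
    (hcont : ContinuousOn h (Metric.closedBall (0 : ℂ) 1))
    (hf : ∀ z : ℂ, f z = (1 / 2 : ℂ) * c * (starRingEnd ℂ) z + h z)
    (hbound : ∀ z : ℂ, ‖z‖ = 1 → ‖f z‖ ≤ r₀) :
    ‖c‖ ≤ 2 * r₀ :=
  abs_c_le_of_boundary_bound_general r₀ c h f hhol hcont hf hbound
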